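/- Let 𝒜 = {A_0, A_1, …} be a canonical collection with bases (b_i). If for some k ≥ 1 the direct sumset A_k ⊕ A_{k+1} ⊕ ⋯ equals Nℤ, where N = b_0 b_1 ⋯ b_{k-1}, then 𝒜 is complete, i.e. an additive system for ℤ. -/

import Mathlib

/-! Downward induction on `k`. If the tail `A_{k+1} ⊕ A_{k+2} ⊕ ⋯` represents every multiple of
`P b_k` (with `P = b_0 ⋯ b_{k-1}`) uniquely, so does `A_k ⊕ A_{k+1} ⊕ ⋯` for the multiples of `P`:
every element of `A_{k+1}, A_{k+2}, …` is divisible by `P b_k`, so in a representation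
`P m = P t + ⋯` of a multiple of `P` the digit `t ∈ T_k` is forced to be the representative of
`m` modulo `b_k`, and the rest is a representation of `P m - P t ∈ P b_k ℤ`. At `k = 0` this is
completeness. -/

/-- `prodBases b i = b 0 * b 1 * ⋯ * b (i-1)`. -/
def prodBases (b : ℕ → ℤ) (i : ℕ) : ℤ := ∏ j ∈ Finset.range i, b j

/-- The member sets `A i = (b 0 ⋯ b (i-1)) • T i` of a canonical collection. -/
def memberSet (b : ℕ → ℤ) (T : ℕ → Set ℤ) (i : ℕ) : Set ℤ :=
  (fun t => prodBases b i * t) '' T i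

/-- `T` is a complete residue system modulo `m` containing `0`. -/
def IsCompleteResidueSystem (m : ℤ) (T : Set ℤ) : Prop :=
  0 ∈ T ∧ ∀ r : ℤ, ∃! t, t ∈ T ∧ t ≡ r [ZMOD m]

/-- `a` is a representation of `n` in the collection `A`. -/
def IsRepr (A : ℕ → Set ℤ) (n : ℤ) (a : ℕ → ℤ) : Prop :=
  (∀ i, a i ∈ A i) ∧ (Function.support a).Finite ∧ n = ∑ᶠ i, a i

theorem finite_support_iff_succ {M : Type*} [Zero M] (a : ℕ → M) :
    (Function.support a).Finite ↔ (Function.support fun i => a (i + 1)).Finite := by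
  have hsucc : Function.support (fun i => a (i + 1)) = (· + 1) ⁻¹' Function.support a := rfl
  rw [hsucc]
  constructor
  · exact fun h => h.preimage (add_left_injective 1).injOn
  · intro h
    refine ((h.image (· + 1)).insert 0).subset fun i hi => ?_
    cases i with
    | zero => exact Set.mem_insert 0 _
    | succ j => exact Set.mem_insert_of_mem 0 ⟨j, hi, rfl⟩

theorem finsum_eq_zero_add_finsum_succ {M : Type*} [AddCommMonoid M] {a : ℕ → M}
    (h : (Function.support a).Finite) :
    ∑ᶠ i, a i = a 0 + ∑ᶠ i, a (i + 1) := by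
  obtain ⟨n, hn⟩ := h.bddAbove
  have hsupp : Function.support a ⊆ ↑(Finset.range (n + 1)) := fun i hi => by
    simpa [Nat.lt_succ_iff] using hn hi
  have hsupp_succ : Function.support (fun i => a (i + 1)) ⊆ ↑(Finset.range n) := fun i hi => by
    simpa [Nat.succ_le_iff] using hn hi
  rw [finsum_eq_sum_of_support_subset a hsupp, finsum_eq_sum_of_support_subset _ hsupp_succ,
    Finset.sum_range_succ', add_comm]

theorem isRepr_iff_succ (A : ℕ → Set ℤ) (n : ℤ) (a : ℕ → ℤ) :
    IsRepr A n a ↔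
      a 0 ∈ A 0 ∧ IsRepr (fun j => A (j + 1)) (n - a 0) (fun j => a (j + 1)) := by
  unfold IsRepr
  rw [← Nat.and_forall_add_one, ← finite_support_iff_succ]
  constructor
  · rintro ⟨⟨h0, hmem⟩, hfin, hsum⟩
    exact ⟨h0, hmem, hfin, by rw [hsum, finsum_eq_zero_add_finsum_succ hfin]; ring⟩
  · rintro ⟨h0, hmem, hfin, hsum⟩
    exact ⟨⟨h0, hmem⟩, hfin, by rw [finsum_eq_zero_add_finsum_succ hfin]; linarith⟩

theorem IsRepr.dvd {A : ℕ → Set ℤ} {n d : ℤ} {a : ℕ → ℤ} (h : IsRepr A n a)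
    (hA : ∀ i, ∀ x ∈ A i, d ∣ x) : d ∣ n := by
  obtain ⟨hmem, hfin, rfl⟩ := h
  rw [finsum_eq_sum _ hfin]
  exact Finset.dvd_sum fun i _ => hA i _ (hmem i)

theorem prodBases_succ (b : ℕ → ℤ) (k : ℕ) : prodBases b (k + 1) = prodBases b k * b k :=
  Finset.prod_range_succ _ _

theorem prodBases_dvd_of_mem_memberSet (b : ℕ → ℤ) (T : ℕ → Set ℤ) {i j : ℕ} (hij : i ≤ j)
    {x : ℤ} (hx : x ∈ memberSet b T j) : prodBases b i ∣ x := by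
  obtain ⟨t, -, rfl⟩ := hx
  exact (Finset.prod_dvd_prod_of_subset _ _ _ (Finset.range_subset_range.2 hij)).mul_right t

/-- `A_k ⊕ A_{k+1} ⊕ ⋯ = (b_0 ⋯ b_{k-1}) ℤ` as a direct sumset. -/
def TailRepresentsUniquely (b : ℕ → ℤ) (T : ℕ → Set ℤ) (k : ℕ) : Prop :=
  ∀ m : ℤ, ∃! a : ℕ → ℤ, IsRepr (fun j => memberSet b T (k + j)) (prodBases b k * m) a

theorem TailRepresentsUniquely.of_succ {b : ℕ → ℤ} {T : ℕ → Set ℤ} {k : ℕ}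
    (hP : prodBases b k ≠ 0) (hT : IsCompleteResidueSystem (b k) (T k))
    (h : TailRepresentsUniquely b T (k + 1)) : TailRepresentsUniquely b T k := by
  intro m
  set P := prodBases b k
  have hshift : (fun j => memberSet b T (k + (j + 1))) = fun j => memberSet b T (k + 1 + j) := by
    simp only [Nat.add_assoc, Nat.add_comm 1]
  have hdigit : ∀ (s : ℤ) (a : ℕ → ℤ),
      IsRepr (fun j => memberSet b T (k + 1 + j)) (P * m - P * s) a → s ≡ m [ZMOD b k] := by
    intro s a ha
    have hdvd : P * b k ∣ P * (m - s) := by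
      rw [mul_sub, ← prodBases_succ]
      exact ha.dvd fun i x => prodBases_dvd_of_mem_memberSet b T (Nat.le_add_right _ i)
    exact Int.modEq_iff_dvd.2 ((mul_dvd_mul_iff_left hP).1 hdvd)
  obtain ⟨t, ⟨htT, htm⟩, ht_unique⟩ := hT.2 m
  obtain ⟨m', hm'⟩ := htm.dvd
  have hrest : P * m - P * t = prodBases b (k + 1) * m' := by
    rw [prodBases_succ, mul_assoc, ← hm', mul_sub]
  obtain ⟨a', ha', ha'_unique⟩ := h m'
  refine ⟨fun | 0 => P * t | j + 1 => a' j, ?_, ?_⟩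
  · show IsRepr _ _ _
    rw [isRepr_iff_succ, hshift, hrest]
    exact ⟨⟨t, htT, rfl⟩, ha'⟩
  · intro c hc
    rw [isRepr_iff_succ, hshift] at hc
    obtain ⟨⟨s, hsT, hs⟩, hc_rest⟩ := hc
    simp only [Nat.add_zero] at hs
    rw [← hs] at hc_rest
    obtain rfl : s = t := ht_unique s ⟨hsT, hdigit s _ hc_rest⟩
    rw [hrest] at hc_rest
    have htail := ha'_unique _ hc_rest
    funext i
    cases i with
    | zero => exact hs.symm
    | succ j => exact congrFun htail j

theorem TailRepresentsUniquely.of_le {b : ℕ → ℤ} {T : ℕ → Set ℤ} {i k : ℕ} (hik : i ≤ k)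
    (hb : ∀ j, b j ≠ 0) (hT : ∀ j, IsCompleteResidueSystem (b j) (T j))
    (h : TailRepresentsUniquely b T k) : TailRepresentsUniquely b T i :=
  Nat.decreasingInduction (motive := fun i _ => TailRepresentsUniquely b T i)
    (fun j _ hj => hj.of_succ (Finset.prod_ne_zero_iff.2 fun l _ => hb l) (hT j)) h hik

/-- If for some `k ≥ 1` the direct sumset `A_k ⊕ A_{k+1} ⊕ ⋯` of a canonical collection
equals `Nℤ` with `N = b_0 ⋯ b_{k-1}`, then the collection is complete, i.e. an additive
system for `ℤ`. -/
theorem complete_of_tail_sumset_eq_NZ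
    (b : ℕ → ℤ) (T : ℕ → Set ℤ)
    (hb : ∀ i, 1 < b i)
    (hT : ∀ i, IsCompleteResidueSystem (b i) (T i))
    (k : ℕ) (N : ℤ) (hN : N = ∏ j ∈ Finset.range k, b j)
    (htail : ∀ m : ℤ, ∃! a : ℕ → ℤ,
        IsRepr (fun j => memberSet b T (k + j)) (N * m) a) :
    ∀ n : ℤ, ∃! a : ℕ → ℤ, IsRepr (memberSet b T) n a := by
  subst hN
  have h0 : TailRepresentsUniquely b T 0 :=
    TailRepresentsUniquely.of_le (Nat.zero_le k) (fun j => (one_pos.trans (hb j)).ne') hT htail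
  intro n
  simpa [TailRepresentsUniquely, prodBases] using h0 n
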